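/- Let U be uniform on {0,1} and let Y₁,…,Y_K be given by Yᵢ = U ⊕ Nᵢ with N₁,…,N_K i.i.d. Bernoulli(p), independent of U, 0 < p ≤ 1/2, q = 1-p. Then the mutual information I(U; Y₁,…,Y_K) (in bits) equals 1 + Kp log₂ p + Kq log₂ q - ∑_{l=0}^{K-1} C(K-1, l)(q^l p^{K-l} + q^{K-l} p^l) log₂(q^l p^{K-l} + q^{K-l} p^l). -/

import Mathlib

open Real

/-- Shannon entropy in bits of a finitely supported probability mass function,
with the convention `0 * logb 2 0 = 0` (note `Real.logb 2 0 = 0`). -/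
noncomputable def discEntropy {α : Type*} [Fintype α] (f : α → ℝ) : ℝ :=
  -∑ a, f a * logb 2 (f a)

/-- Mutual information (in bits) of the two coordinates of a joint pmf on `α × β`:
`I = H(A) + H(B) - H(A,B)`. -/
noncomputable def discMI {α β : Type*} [Fintype α] [Fintype β] (f : α × β → ℝ) : ℝ :=
  discEntropy (fun a => ∑ b, f (a, b)) + discEntropy (fun b => ∑ a, f (a, b))
    - discEntropy f

/-- Joint pmf of `(U, (Y₁,…,Y_K))` where `U` is uniform on `{0,1}` and
`Yᵢ = U ⊕ Nᵢ` with `Nᵢ` i.i.d. Bernoulli `p` independent of `U`. -/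
noncomputable def jointUY (K : ℕ) (p : ℝ) : ZMod 2 × (Fin K → ZMod 2) → ℝ :=
  fun uy => (1/2) * ∏ i, (if uy.2 i = uy.1 then 1 - p else p)

/-!
Given `U`, the outputs `Yᵢ` are independent outputs of a binary symmetric channel, so
`H(U, Y) = H(U) + K h(p) = 1 + K h(p)`. The law of `Y` depends only on the number `w` of ones
of `y`: `P(Y = y) = ((1-p)^w p^(K-w) + (1-p)^(K-w) p^w) / 2`. Hence `H(Y)` is a sum over `w`
weighted by `C(K, w)`; the summand is symmetric under `w ↦ K - w`, and Pascal's rule folds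
`C(K, w)` into `2 C(K-1, l)`. Then `I = H(U) + H(Y) - H(U, Y)`.
-/

open Finset

-- No positivity is needed: both sides vanish when `x` or `y` is `0`, as `logb b 0 = 0`.
lemma mul_logb_mul (b x y : ℝ) :
    x * y * logb b (x * y) = y * (x * logb b x) + x * (y * logb b y) := by
  have h := negMulLog_mul x y
  simp only [negMulLog, logb, div_eq_mul_inv] at h ⊢
  linear_combination -(log b)⁻¹ * h

lemma prod_mul_logb_prod {ι : Type*} [DecidableEq ι] (b : ℝ) (s : Finset ι) (x : ι → ℝ) :
    (∏ j ∈ s, x j) * logb b (∏ j ∈ s, x j)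
      = ∑ i ∈ s, ∏ j ∈ s, if j = i then x j * logb b (x j) else x j := by
  induction s using Finset.induction_on with
  | empty => simp
  | insert a s ha ih =>
    have hs : ∏ j ∈ s, (if j = a then x j * logb b (x j) else x j) = ∏ j ∈ s, x j :=
      prod_congr rfl fun j hj => if_neg (ne_of_mem_of_not_mem hj ha)
    have hrest : ∀ i ∈ s, ∏ j ∈ insert a s, (if j = i then x j * logb b (x j) else x j)
        = x a * ∏ j ∈ s, if j = i then x j * logb b (x j) else x j := fun i hi => by
      rw [prod_insert ha, if_neg (ne_of_mem_of_not_mem hi ha).symm]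
    rw [sum_insert ha, sum_congr rfl hrest, ← mul_sum, ← ih, prod_insert ha, prod_insert ha,
      if_pos rfl, hs, mul_logb_mul]
    ring

lemma sum_prod_eq_one {ι α : Type*} [Fintype ι] [DecidableEq ι] [Fintype α]
    (f : ι → α → ℝ) (hf : ∀ i, ∑ a, f i a = 1) :
    ∑ y : ι → α, ∏ i, f i (y i) = 1 := by
  simp [← Fintype.prod_sum, hf]

lemma discEntropy_pi {ι α : Type*} [Fintype ι] [DecidableEq ι] [Fintype α]
    (f : ι → α → ℝ) (hf : ∀ i, ∑ a, f i a = 1) :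
    discEntropy (fun y : ι → α => ∏ i, f i (y i)) = ∑ i, discEntropy (f i) := by
  -- The `i`-th term of the expanded logarithm sums to `H(f i) * ∏ j ≠ i, ∑ a, f j a`.
  simp only [discEntropy, prod_mul_logb_prod, ← sum_neg_distrib]
  rw [sum_comm]
  refine sum_congr rfl fun i _ => ?_
  have h : ∀ y : ι → α, (∏ j, if j = i then f j (y j) * logb 2 (f j (y j)) else f j (y j))
      = ∏ j, (if j = i then fun a => f j a * logb 2 (f j a) else f j) (y j) :=
    fun y => prod_congr rfl fun j _ => by split_ifs <;> rfl
  simp only [h, ← Fintype.prod_sum, apply_ite (fun g : α → ℝ => ∑ a, g a), hf,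
    prod_ite_eq', mem_univ, if_true, sum_neg_distrib]

lemma discEntropy_const_mul {α : Type*} [Fintype α] (c : ℝ) (f : α → ℝ) :
    discEntropy (fun a => c * f a) = c * discEntropy f - (∑ a, f a) * (c * logb 2 c) := by
  simp only [discEntropy, mul_logb_mul, sum_add_distrib, ← sum_mul, ← mul_sum]
  ring

lemma discEntropy_prod_type {α β : Type*} [Fintype α] [Fintype β] (f : α × β → ℝ) :
    discEntropy f = ∑ a, discEntropy (fun b => f (a, b)) := by
  simp only [discEntropy, Fintype.sum_prod_type, sum_neg_distrib]

-- Pascal's rule splits the sum in two, and reflecting `l ↦ n - l` identifies the halves.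
lemma sum_range_choose_succ_mul_of_symm (n : ℕ) (t : ℕ → ℝ)
    (ht : ∀ w ≤ n + 1, t (n + 1 - w) = t w) :
    ∑ w ∈ range (n + 2), ((n + 1).choose w : ℝ) * t w
      = 2 * ∑ l ∈ range (n + 1), (n.choose l : ℝ) * t l := by
  have hsplit := sum_choose_succ_mul (R := ℝ) (fun i _ => t i) n
  have hreflect : ∑ i ∈ range (n + 1), (n.choose i : ℝ) * t (i + 1)
      = ∑ l ∈ range (n + 1), (n.choose l : ℝ) * t l := by
    rw [← sum_range_reflect]
    refine sum_congr rfl fun l hl => ?_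
    have hl : l ≤ n := Nat.lt_succ_iff.mp (mem_range.mp hl)
    rw [Nat.add_sub_cancel, Nat.choose_symm hl, ← ht l (by omega)]
    congr 2
    omega
  rw [hsplit, hreflect]
  ring

def onesEquiv (ι : Type*) [Fintype ι] [DecidableEq ι] : (ι → ZMod 2) ≃ Finset ι where
  toFun y := {i | y i = 1}
  invFun s i := if i ∈ s then 1 else 0
  left_inv y := by
    funext i
    simp only [mem_filter, mem_univ, true_and]
    generalize y i = b
    fin_cases b <;> rfl
  right_inv s := by
    ext i
    by_cases h : i ∈ s <;> simp [h]

lemma sum_fun_zmod_two_eq_sum_choose {ι : Type*} [Fintype ι] [DecidableEq ι] (G : ℕ → ℝ) :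
    ∑ y : ι → ZMod 2, G #{i | y i = 1}
      = ∑ w ∈ range (Fintype.card ι + 1), ((Fintype.card ι).choose w : ℝ) * G w := by
  calc ∑ y : ι → ZMod 2, G #{i | y i = 1} = ∑ y, G #(onesEquiv ι y) := rfl
    _ = ∑ s, G #s := (onesEquiv ι).sum_comp fun s => G #s
    _ = _ := by simp only [← powerset_univ, sum_powerset_apply_card, card_univ, nsmul_eq_mul]

lemma prod_ite_eq_pow_mul_pow {ι M : Type*} [Fintype ι] [CommMonoid M] (P : ι → Prop)
    [DecidablePred P] (x z : M) :
    ∏ i, (if P i then x else z) = x ^ #{i | P i} * z ^ (Fintype.card ι - #{i | P i}) := by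
  rw [prod_ite, prod_const, prod_const, Fintype.card,
    ← card_filter_add_card_filter_not (s := univ) P, Nat.add_sub_cancel_left]

lemma sum_zmod_two (g : ZMod 2 → ℝ) : ∑ b, g b = g 0 + g 1 := Fin.sum_univ_two g

def bscRow (p : ℝ) (a b : ZMod 2) : ℝ := if b = a then 1 - p else p

lemma sum_bscRow (p : ℝ) (a : ZMod 2) : ∑ b, bscRow p a b = 1 := by
  simp [bscRow, sum_ite, filter_eq', filter_ne']

lemma discEntropy_bscRow (p : ℝ) (a : ZMod 2) :
    discEntropy (bscRow p a) = -(p * logb 2 p + (1 - p) * logb 2 (1 - p)) := by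
  simp [discEntropy, bscRow, apply_ite (fun x : ℝ => x * logb 2 x), sum_ite, filter_eq',
    filter_ne']
  ring

lemma jointUY_apply (K : ℕ) (p : ℝ) (a : ZMod 2) (y : Fin K → ZMod 2) :
    jointUY K p (a, y) = 1 / 2 * ∏ i, bscRow p a (y i) := rfl

lemma discEntropy_marginal_fst_jointUY (K : ℕ) (p : ℝ) :
    discEntropy (fun a => ∑ y, jointUY K p (a, y)) = 1 := by
  simp only [jointUY_apply, ← mul_sum, sum_prod_eq_one _ fun _ => sum_bscRow p _]
  simp [discEntropy]

lemma discEntropy_jointUY (K : ℕ) (p : ℝ) :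
    discEntropy (jointUY K p) = 1 - K * (p * logb 2 p + (1 - p) * logb 2 (1 - p)) := by
  simp only [discEntropy_prod_type, jointUY_apply, discEntropy_const_mul,
    discEntropy_pi _ fun _ => sum_bscRow p _, discEntropy_bscRow,
    sum_prod_eq_one _ fun _ => sum_bscRow p _]
  simp only [sum_const, card_univ, Fintype.card_fin, ZMod.card, nsmul_eq_mul, one_div,
    logb_inv, logb_self_eq_one one_lt_two]
  push_cast
  ring

def outputMass (K : ℕ) (p : ℝ) (l : ℕ) : ℝ :=
  (1 - p) ^ l * p ^ (K - l) + (1 - p) ^ (K - l) * p ^ l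

lemma outputMass_sub {K l : ℕ} (p : ℝ) (hl : l ≤ K) :
    outputMass K p (K - l) = outputMass K p l := by
  rw [outputMass, outputMass, Nat.sub_sub_self hl]
  ring

lemma sum_range_choose_mul_outputMass (K : ℕ) (p : ℝ) :
    ∑ w ∈ range (K + 1), (K.choose w : ℝ) * outputMass K p w = 2 :=
  calc ∑ w ∈ range (K + 1), (K.choose w : ℝ) * outputMass K p w
      = ((1 - p) + p) ^ K + (p + (1 - p)) ^ K := by
        rw [add_pow, add_pow, ← sum_add_distrib]
        exact sum_congr rfl fun w _ => by rw [outputMass]; ring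
    _ = 2 := by norm_num

lemma marginal_snd_jointUY (K : ℕ) (p : ℝ) (y : Fin K → ZMod 2) :
    ∑ a, jointUY K p (a, y) = 1 / 2 * outputMass K p #{i | y i = 1} := by
  have hzero : ∀ i, bscRow p 0 (y i) = if y i = 1 then p else 1 - p := fun i => by
    rw [bscRow]
    generalize y i = b
    fin_cases b <;> rfl
  simp only [sum_zmod_two, jointUY_apply, hzero]
  simp only [bscRow, prod_ite_eq_pow_mul_pow, Fintype.card_fin, outputMass]
  ring

lemma discEntropy_marginal_snd_jointUY (K : ℕ) (hK : 1 ≤ K) (p : ℝ) :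
    discEntropy (fun y => ∑ a, jointUY K p (a, y))
      = 1 - ∑ l ∈ range K, ((K - 1).choose l : ℝ) * outputMass K p l
          * logb 2 (outputMass K p l) := by
  obtain ⟨n, rfl⟩ := Nat.exists_eq_add_of_le' hK
  set G : ℕ → ℝ := fun w => outputMass (n + 1) p w * logb 2 (outputMass (n + 1) p w)
  have hmass : ∑ y : Fin (n + 1) → ZMod 2, outputMass (n + 1) p #{i | y i = 1} = 2 := by
    rw [sum_fun_zmod_two_eq_sum_choose, Fintype.card_fin, sum_range_choose_mul_outputMass]
  have hent : discEntropy (fun y : Fin (n + 1) → ZMod 2 => outputMass (n + 1) p #{i | y i = 1})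
      = -(2 * ∑ l ∈ range (n + 1), (n.choose l : ℝ) * G l) := by
    rw [discEntropy, sum_fun_zmod_two_eq_sum_choose G, Fintype.card_fin,
      sum_range_choose_succ_mul_of_symm n G fun w hw => by simp only [G, outputMass_sub p hw]]
  simp only [marginal_snd_jointUY]
  rw [discEntropy_const_mul, hmass, hent, Nat.add_sub_cancel]
  simp only [G, ← mul_assoc, one_div, logb_inv, logb_self_eq_one one_lt_two]
  ring

theorem mutualInfo_forwarding_general (K : ℕ) (hK : 1 ≤ K) (p : ℝ) :
    discMI (jointUY K p)
      = 1 + K * p * logb 2 p + K * (1-p) * logb 2 (1-p)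
        - ∑ l ∈ Finset.range K, (Nat.choose (K-1) l : ℝ)
            * ((1-p) ^ l * p ^ (K - l) + (1-p) ^ (K - l) * p ^ l)
            * logb 2 ((1-p) ^ l * p ^ (K - l) + (1-p) ^ (K - l) * p ^ l) := by
  rw [discMI, discEntropy_marginal_fst_jointUY, discEntropy_marginal_snd_jointUY K hK,
    discEntropy_jointUY]
  simp only [outputMass]
  ring

theorem mutualInfo_forwarding (K : ℕ) (hK : 1 ≤ K) (p : ℝ) (hp : 0 < p) (hp' : p ≤ 1/2) :
    discMI (jointUY K p)
      = 1 + K * p * logb 2 p + K * (1-p) * logb 2 (1-p)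
        - ∑ l ∈ Finset.range K, (Nat.choose (K-1) l : ℝ)
            * ((1-p) ^ l * p ^ (K - l) + (1-p) ^ (K - l) * p ^ l)
            * logb 2 ((1-p) ^ l * p ^ (K - l) + (1-p) ^ (K - l) * p ^ l) :=
  mutualInfo_forwarding_general K hK p
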